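/- arXiv:1112.3827 — 3 statements merged into one kernel-verified Lean document; each statement's English description precedes it below -/
import Mathlib

section
/- For the UCB(ρ) policy with parameter ρ>0, in the environment θ=(δ_a,δ_b) with 0≤b<a≤1, the number of pulls of the suboptimal arm satisfies T_2(t) ≤ t/2 for every t≥2. -/
open MeasureTheory ProbabilityTheory Filter Asymptotics

noncomputable section

namespace Bandit

/-- Empirical mean of the first `s` values of the sequence `x`. -/
def empMean (x : ℕ → ℝ) (s : ℕ) : ℝ := (∑ u ∈ Finset.range s, x u) / s

/-- An element of `Fin K` maximizing `g`. -/
def argmaxFin {K : ℕ} (hK : 0 < K) (g : Fin K → ℝ) : Fin K :=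
  (Finset.univ.exists_max_image g ⟨⟨0, hK⟩, Finset.mem_univ _⟩).choose

theorem argmaxFin_spec {K : ℕ} (hK : 0 < K) (g : Fin K → ℝ) (j : Fin K) :
    g j ≤ g (argmaxFin hK g) := by
  have h := (Finset.univ.exists_max_image g ⟨⟨0, hK⟩, Finset.mem_univ _⟩).choose_spec
  exact h.2 j (Finset.mem_univ j)

/-- The arm pulled at round `t` by a generalized UCB policy with exploration functions `f`,
given the reward table `x` (where `x k u` is the reward of the `(u+1)`-th pull of arm `k`)
and the vector `T` of numbers of pulls of each arm before round `t`.
During the first `K` rounds (`t ≤ K`), each arm is pulled once; afterwards an arm maximizing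
the UCB index `X̂_{k,T_k(t-1)} + √(f_k(t) / T_k(t-1))` is pulled. -/
def ucbArmAux {K : ℕ} (hK : 0 < K) (f : Fin K → ℕ → ℝ) (x : Fin K → ℕ → ℝ)
    (T : Fin K → ℕ) (t : ℕ) : Fin K :=
  if h : t ≤ K then ⟨t - 1, by omega⟩
  else argmaxFin hK fun j => empMean (x j) (T j) + Real.sqrt (f j t / (T j : ℝ))

/-- `ucbCount hK f x t k` is `T_k(t)`, the number of pulls of arm `k` during rounds `1,…,t`
by the generalized UCB policy with exploration functions `f` on the reward table `x`. -/
def ucbCount {K : ℕ} (hK : 0 < K) (f : Fin K → ℕ → ℝ) (x : Fin K → ℕ → ℝ) :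
    ℕ → Fin K → ℕ
  | 0, _ => 0
  | t + 1, k =>
    ucbCount hK f x t k + if ucbArmAux hK f x (ucbCount hK f x t) (t + 1) = k then 1 else 0

/-- The arm pulled at round `t ≥ 1` by the generalized UCB policy. -/
def ucbArm {K : ℕ} (hK : 0 < K) (f : Fin K → ℕ → ℝ) (x : Fin K → ℕ → ℝ) (t : ℕ) : Fin K :=
  ucbArmAux hK f x (ucbCount hK f x (t - 1)) t

/-- The exploration function of the UCB(ρ) policy: `f_k(t) = ρ log t` for every arm. -/
def rhoLog {K : ℕ} (ρ : ℝ) : Fin K → ℕ → ℝ := fun _ t => ρ * Real.log t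

/-- The reward table of the two-armed deterministic environment `θ = (δ_a, δ_b)`:
arm `0` always gives `a` and arm `1` always gives `b`. -/
def diracTable (a b : ℝ) : Fin 2 → ℕ → ℝ := fun k _ => if k = 0 then a else b
end Bandit

/-!
Arm 2 (index `1` in `Fin 2`) can be pulled at a round `t + 1 > 2` only if its UCB index is at least that of arm 1.
Both indices carry the same exploration numerator `ρ log (t + 1)`, and arm 1 has the larger
empirical mean, so this forces `T₂(t) < T₁(t)`. Hence a pull of arm 2 never lifts `T₂` above
`T₁`, and `2 T₂(t) ≤ t = T₁(t) + T₂(t)` propagates by induction from `t = 2`.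
-/

namespace Bandit

def ucbIndex {K : ℕ} (f : Fin K → ℕ → ℝ) (x : Fin K → ℕ → ℝ) (T : Fin K → ℕ) (t : ℕ)
    (j : Fin K) : ℝ :=
  empMean (x j) (T j) + Real.sqrt (f j t / (T j : ℝ))

theorem empMean_of_forall_eq {x : ℕ → ℝ} {c : ℝ} (hx : ∀ u, x u = c) {s : ℕ} (hs : 0 < s) :
    empMean x s = c := by
  simp only [empMean, hx, Finset.sum_const, Finset.card_range, nsmul_eq_mul]
  field_simp

theorem lt_of_add_sqrt_div_le_add_sqrt_div {m₀ m₁ c T₀ T₁ : ℝ} (hm : m₁ < m₀)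
    (hT₀ : 0 < T₀) (hT₁ : 0 < T₁)
    (h : m₀ + Real.sqrt (c / T₀) ≤ m₁ + Real.sqrt (c / T₁)) : T₁ < T₀ := by
  have hsqrt : Real.sqrt (c / T₀) < Real.sqrt (c / T₁) := by linarith
  have hpos : 0 < c / T₁ := Real.sqrt_pos.mp ((Real.sqrt_nonneg _).trans_lt hsqrt)
  have hc : 0 < c := (div_pos_iff_of_pos_right hT₁).mp hpos
  rw [Real.sqrt_lt_sqrt_iff_of_pos hpos, div_lt_div_iff_of_pos_left hc hT₀ hT₁] at hsqrt
  exact hsqrt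

section General

variable {K : ℕ} (hK : 0 < K) (f : Fin K → ℕ → ℝ) (x : Fin K → ℕ → ℝ)

theorem ucbCount_succ (t : ℕ) (k : Fin K) :
    ucbCount hK f x (t + 1) k =
      ucbCount hK f x t k + if ucbArm hK f x (t + 1) = k then 1 else 0 :=
  rfl

theorem sum_ucbCount (t : ℕ) : ∑ k, ucbCount hK f x t k = t := by
  induction t with
  | zero => simp [ucbCount]
  | succ t ih => simp [ucbCount_succ, Finset.sum_add_distrib, ih]

theorem ucbCount_monotone (k : Fin K) : Monotone fun t => ucbCount hK f x t k :=
  monotone_nat_of_le_succ fun t => by simp [ucbCount_succ]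

theorem ucbArm_of_le {t : ℕ} (ht : t ≤ K) : ucbArm hK f x t = ⟨t - 1, by omega⟩ := by
  rw [ucbArm, ucbArmAux, dif_pos ht]

theorem ucbCount_of_le {t : ℕ} (ht : t ≤ K) (k : Fin K) :
    ucbCount hK f x t k = if (k : ℕ) < t then 1 else 0 := by
  induction t with
  | zero => simp [ucbCount]
  | succ t ih =>
    rw [ucbCount_succ, ih (by omega), ucbArm_of_le hK f x ht]
    simp only [Fin.ext_iff, Nat.add_sub_cancel]
    split_ifs <;> omega

theorem one_le_ucbCount {t : ℕ} (ht : K ≤ t) (k : Fin K) : 1 ≤ ucbCount hK f x t k :=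
  calc 1 = ucbCount hK f x K k := by simp [ucbCount_of_le hK f x le_rfl]
    _ ≤ ucbCount hK f x t k := ucbCount_monotone hK f x k ht

theorem ucbIndex_le_ucbIndex_ucbArm {t : ℕ} (ht : K ≤ t) (j : Fin K) :
    ucbIndex f x (ucbCount hK f x t) (t + 1) j ≤
      ucbIndex f x (ucbCount hK f x t) (t + 1) (ucbArm hK f x (t + 1)) := by
  rw [ucbArm, ucbArmAux, dif_neg (by omega)]
  exact argmaxFin_spec hK _ j

end General

section TwoArmed

variable (hK : 0 < 2) {f : Fin 2 → ℕ → ℝ} {x : Fin 2 → ℕ → ℝ}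

theorem ucbCount_one_lt_of_ucbArm_eq_one (hf : f 0 = f 1)
    (hx : ∀ s s', 0 < s → 0 < s' → empMean (x 1) s' < empMean (x 0) s)
    {t : ℕ} (ht : 2 ≤ t) (harm : ucbArm hK f x (t + 1) = 1) :
    ucbCount hK f x t 1 < ucbCount hK f x t 0 := by
  have hT₀ := one_le_ucbCount hK f x ht 0
  have hT₁ := one_le_ucbCount hK f x ht 1
  have hindex := ucbIndex_le_ucbIndex_ucbArm hK f x ht 0
  rw [harm, ucbIndex, ucbIndex, hf] at hindex
  exact_mod_cast lt_of_add_sqrt_div_le_add_sqrt_div (hx _ _ hT₀ hT₁)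
    (by exact_mod_cast hT₀) (by exact_mod_cast hT₁) hindex

theorem two_mul_ucbCount_one_le (hf : f 0 = f 1)
    (hx : ∀ s s', 0 < s → 0 < s' → empMean (x 1) s' < empMean (x 0) s)
    {t : ℕ} (ht : 2 ≤ t) : 2 * ucbCount hK f x t 1 ≤ t := by
  induction t, ht using Nat.le_induction with
  | base => simp [ucbCount_of_le hK f x le_rfl]
  | succ t ht ih =>
    rw [ucbCount_succ]
    by_cases harm : ucbArm hK f x (t + 1) = 1
    · have hlt := ucbCount_one_lt_of_ucbArm_eq_one hK hf hx ht harm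
      have hsum := sum_ucbCount hK f x t
      rw [Fin.sum_univ_two] at hsum
      simp only [harm, if_true]
      omega
    · simp only [harm, if_false]
      omega

end TwoArmed

theorem ucbRho_dirac_pull_le_half_general
    (ρ : ℝ) (a b : ℝ) (hba : b < a)
    (t : ℕ) (ht : 2 ≤ t) :
    (ucbCount (Nat.succ_pos 1) (rhoLog ρ) (diracTable a b) t 1 : ℝ) ≤ (t : ℝ) / 2 := by
  have hx : ∀ s s', 0 < s → 0 < s' →
      empMean (diracTable a b 1) s' < empMean (diracTable a b 0) s := fun s s' hs hs' => by
    rwa [empMean_of_forall_eq (x := diracTable a b 0) (fun _ => if_pos rfl) hs,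
      empMean_of_forall_eq (x := diracTable a b 1) (fun _ => if_neg Fin.zero_lt_one.ne') hs']
  have h := two_mul_ucbCount_one_le (Nat.succ_pos 1) (f := rhoLog ρ) rfl hx ht
  rw [le_div_iff₀ two_pos]
  exact_mod_cast (mul_comm _ _).trans_le h

/-- For UCB(ρ) with ρ > 0 in the environment θ = (δ_a, δ_b) with
0 ≤ b < a ≤ 1, the number of pulls of the suboptimal arm satisfies T_2(t) ≤ t/2
for every t ≥ 2. -/
theorem ucbRho_dirac_pull_le_half
    (ρ : ℝ) (hρ : 0 < ρ) (a b : ℝ) (hb : 0 ≤ b) (hba : b < a) (ha : a ≤ 1)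
    (t : ℕ) (ht : 2 ≤ t) :
    (ucbCount (Nat.succ_pos 1) (rhoLog ρ) (diracTable a b) t 1 : ℝ) ≤ (t : ℝ) / 2 :=
  ucbRho_dirac_pull_le_half_general ρ a b hba t ht

end Bandit
end
end

section
/- Let (Y_u)_{u≥1} be i.i.d. random variables with values in [0,1] and mean μ, and let Ŷ_s = (1/s)Σ_{u=1}^s Y_u. Then for every ρ>0, every β∈(0,1) and every integer t≥2: P( ∃ s∈{1,…,t}: Ŷ_s + √(ρ log t/s) ≤ μ ) ≤ ( log t/log(1/β) + 1 )·t^{−2ρβ}; and likewise P( ∃ s∈{1,…,t}: Ŷ_s ≥ μ + √(ρ log t/s) ) ≤ ( log t/log(1/β) + 1 )·t^{−2ρβ}. -/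
open MeasureTheory ProbabilityTheory Filter Asymptotics

noncomputable section

/-! Splitting the event `max_{k ≤ n} S_k ≥ ε` at its first crossing time `k` gives the maximal
form of Chernoff's bound: on that event `S_n ≥ ε + (S_n - S_k)`, and the increment `S_n - S_k`
is independent of it with `𝔼 exp (l (S_n - S_k)) ≥ 1` because it is centred. Hence
`e^{lε} P(max_{k ≤ n} S_k ≥ ε) ≤ 𝔼 e^{l S_n} ≤ e^{n c l² / 2}` for `c`-sub-Gaussian increments,
and Hoeffding's lemma gives `c = 1/4` for `[0,1]`-valued variables.

For the peeling, every `s ∈ {1,…,t}` lies in a slice `(β^{j+1} t, β^j t]` with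
`j ≤ log t / log (1/β)`. On that slice `√(s ρ log t) ≥ √(β^{j+1} t ρ log t)`, so the maximal
inequality over the first `⌊β^j t⌋` partial sums bounds the slice by
`exp (-2 β^{j+1} t ρ log t / (β^j t)) = t^{-2ρβ}`. -/

open Real Finset Function
open scoped NNReal

namespace Bandit

section FirstCrossing

variable {Ω : Type*} (S : ℕ → Ω → ℝ) (ε : ℝ)

def firstCrossing (k : ℕ) : Set Ω := {ω | ε ≤ S k ω ∧ ∀ j < k, S j ω < ε}

lemma pairwise_disjoint_firstCrossing : Pairwise (Disjoint on firstCrossing S ε) := by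
  intro j k hjk
  refine Set.disjoint_left.2 fun ω hj hk => ?_
  rcases hjk.lt_or_gt with h | h
  · exact (hk.2 j h).not_ge hj.1
  · exact (hj.2 k h).not_ge hk.1

lemma setOf_exists_le_eq_biUnion_firstCrossing (n : ℕ) :
    {ω | ∃ k ≤ n, ε ≤ S k ω} = ⋃ k ∈ range (n + 1), firstCrossing S ε k := by
  classical
  ext ω
  simp only [Set.mem_ofPred_eq, Set.mem_iUnion, mem_range, Nat.lt_succ_iff, exists_prop]
  constructor
  · rintro ⟨k, hkn, hk⟩
    have hex : ∃ k, ε ≤ S k ω := ⟨k, hk⟩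
    exact ⟨Nat.find hex, (Nat.find_min' hex hk).trans hkn, Nat.find_spec hex,
      fun j hj => lt_of_not_ge (Nat.find_min hex hj)⟩
  · rintro ⟨k, hkn, hk, -⟩
    exact ⟨k, hkn, hk⟩

lemma measurableSet_firstCrossing {m : MeasurableSpace Ω} {k : ℕ}
    (hS : ∀ j ≤ k, Measurable[m] (S j)) : MeasurableSet[m] (firstCrossing S ε k) := by
  have : firstCrossing S ε k = {ω | ε ≤ S k ω} ∩ ⋂ j ∈ Set.Iio k, {ω | S j ω < ε} := by
    ext ω; simp [firstCrossing]
  rw [this]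
  exact (measurableSet_le measurable_const (hS k le_rfl)).inter <|
    .biInter (Set.to_countable _) fun j hj => measurableSet_lt (hS j (le_of_lt hj)) measurable_const

end FirstCrossing

lemma one_le_pow_mul_iff {β x : ℝ} (hβ0 : 0 < β) (hβ1 : β < 1) (hx : 0 < x) (j : ℕ) :
    1 ≤ β ^ j * x ↔ (j : ℝ) ≤ log x / log (1 / β) := by
  rw [le_div_iff₀ (log_pos ((one_lt_div hβ0).2 hβ1)), ← log_nonneg_iff (by positivity),
    log_mul (by positivity) hx.ne', log_pow, one_div, log_inv]
  constructor <;> intro h <;> linarith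

lemma exists_pow_succ_mul_lt_le_pow_mul {β : ℝ} (hβ0 : 0 < β) (hβ1 : β < 1) {s t : ℕ}
    (hs : 1 ≤ s) (hst : s ≤ t) :
    ∃ j ≤ ⌊log t / log (1 / β)⌋₊, β ^ (j + 1) * t < s ∧ s ≤ β ^ j * t := by
  have hs1 : (1 : ℝ) ≤ s := by exact_mod_cast hs
  have hs0 : (0 : ℝ) < s := one_pos.trans_le hs1
  have hts : (0 : ℝ) < t / s := div_pos (hs0.trans_le (by exact_mod_cast hst)) hs0
  have h_iff : ∀ j : ℕ, (s : ℝ) ≤ β ^ j * t ↔ (j : ℝ) ≤ log (t / s) / log (1 / β) := fun j => by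
    rw [← one_le_pow_mul_iff hβ0 hβ1 hts, ← mul_div_assoc, one_le_div hs0]
  have hy : 0 ≤ log (t / s) / log (1 / β) :=
    div_nonneg (log_nonneg ((one_le_div hs0).2 (by exact_mod_cast hst)))
      (log_nonneg ((one_le_div hβ0).2 hβ1.le))
  set j := ⌊log (t / s) / log (1 / β)⌋₊
  have h_le : (s : ℝ) ≤ β ^ j * t := (h_iff j).2 (Nat.floor_le hy)
  refine ⟨j, Nat.le_floor ?_, lt_of_not_ge fun h => ?_, h_le⟩
  · exact (one_le_pow_mul_iff hβ0 hβ1 (hts.trans_le (div_le_self (by positivity) hs1)) j).1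
      (hs1.trans h_le)
  · exact (Nat.lt_floor_add_one _).not_ge (by exact_mod_cast (h_iff (j + 1)).1 h)

lemma sqrt_mul_eq_mul_sqrt_div {s : ℝ} (hs : 0 ≤ s) (a : ℝ) : √(s * a) = s * √(a / s) := by
  rcases hs.eq_or_lt with rfl | hs
  · simp
  rw [sqrt_div' a hs.le, sqrt_mul hs.le, mul_div_left_comm, div_sqrt, mul_comm]

lemma empMean_add_le_iff {x : ℕ → ℝ} {s : ℕ} (hs : 0 < s) (q μ : ℝ) :
    empMean x s + q ≤ μ ↔ s * q ≤ ∑ u ∈ range s, (μ - x u) := by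
  rw [empMean, sum_sub_distrib, sum_const, card_range, nsmul_eq_mul,
    div_add' _ _ _ (by positivity), div_le_iff₀ (by positivity)]
  constructor <;> intro h <;> linarith

lemma add_le_empMean_iff {x : ℕ → ℝ} {s : ℕ} (hs : 0 < s) (q μ : ℝ) :
    μ + q ≤ empMean x s ↔ s * q ≤ ∑ u ∈ range s, (x u - μ) := by
  rw [empMean, sum_sub_distrib, sum_const, card_range, nsmul_eq_mul,
    le_div_iff₀ (by positivity)]
  constructor <;> intro h <;> linarith

lemma measurable_sum_iSup_comap {Ω : Type*} (Z : ℕ → Ω → ℝ) {s : Finset ℕ} {I : Set ℕ}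
    (hsI : ↑s ⊆ I) :
    Measurable[⨆ i ∈ I, MeasurableSpace.comap (Z i) inferInstance] fun ω => ∑ i ∈ s, Z i ω :=
  Finset.measurable_sum s fun i hi =>
    (comap_measurable (Z i)).mono (le_iSup₂ (f := fun i _ => MeasurableSpace.comap (Z i) _) i
      (hsI hi)) le_rfl

section IndependentSums

variable {Ω : Type*} {mΩ : MeasurableSpace Ω} {P : Measure Ω} [IsProbabilityMeasure P]
  {Z : ℕ → Ω → ℝ} {c : ℝ≥0}

lemma exp_mul_measureReal_firstCrossing_le_setIntegral (h_indep : iIndepFun Z P)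
    (hZ : ∀ i, Measurable (Z i)) (h_subG : ∀ i, HasSubgaussianMGF (Z i) c P)
    (h0 : ∀ i, P[Z i] = 0) {l : ℝ} (hl : 0 ≤ l) (ε : ℝ) {k n : ℕ} (hkn : k ≤ n) :
    exp (l * ε) * P.real (firstCrossing (fun k ω => ∑ i ∈ range k, Z i ω) ε k) ≤
      ∫ ω in firstCrossing (fun k ω => ∑ i ∈ range k, Z i ω) ε k,
        exp (l * ∑ i ∈ range n, Z i ω) ∂P := by
  set A := firstCrossing (fun k ω => ∑ i ∈ range k, Z i ω) ε k
  set T : Ω → ℝ := fun ω => ∑ i ∈ Ico k n, Z i ω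
  have hT_subG : HasSubgaussianMGF T (∑ i ∈ Ico k n, c) P :=
    HasSubgaussianMGF.sum_of_iIndepFun h_indep fun i _ => h_subG i
  have hT_int : Integrable T P := hT_subG.integrable
  have h_one_le : 1 ≤ ∫ ω, exp (l * T ω) ∂P := by
    have hT_mean : ∫ ω, T ω ∂P = 0 := by
      rw [integral_finsetSum _ fun i _ => (h_subG i).integrable]
      simp [h0]
    calc (1 : ℝ) = ∫ ω, (l * T ω + 1) ∂P := by
          rw [integral_add (hT_int.const_mul l) (integrable_const 1), integral_const_mul,
            hT_mean]
          simp
      _ ≤ ∫ ω, exp (l * T ω) ∂P :=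
          integral_mono ((hT_int.const_mul l).add (integrable_const 1))
            (hT_subG.integrable_exp_mul l) fun ω => add_one_le_exp _
  have hA_meas : MeasurableSet[⨆ i ∈ Set.Iio k, MeasurableSpace.comap (Z i) inferInstance] A :=
    measurableSet_firstCrossing _ _ fun j hj =>
      measurable_sum_iSup_comap Z fun i hi => by simp at hi ⊢; omega
  have h_past_le : ⨆ i ∈ Set.Iio k, MeasurableSpace.comap (Z i) inferInstance ≤ mΩ :=
    iSup₂_le fun i _ => (hZ i).comap_le
  have h_indep_T : Indep (⨆ i ∈ Set.Iio k, MeasurableSpace.comap (Z i) inferInstance)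
      (MeasurableSpace.comap T inferInstance) P :=
    indep_of_indep_of_le_right
      (indep_iSup_of_disjoint (fun i => (hZ i).comap_le) h_indep.iIndep
        (Set.Iio_disjoint_Ici le_rfl))
      (measurable_sum_iSup_comap Z fun i hi => by simp at hi ⊢; omega).comap_le
  have h_split : ∀ ω, ∑ i ∈ range n, Z i ω = ∑ i ∈ range k, Z i ω + T ω := fun ω =>
    (sum_range_add_sum_Ico _ hkn).symm
  calc exp (l * ε) * P.real A ≤ exp (l * ε) * (P.real A * ∫ ω, exp (l * T ω) ∂P) := by
        gcongr
        exact le_mul_of_one_le_right measureReal_nonneg h_one_le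
    _ = exp (l * ε) * ∫ ω in A, exp (l * T ω) ∂P := by
        rw [h_indep_T.setIntegral_eq_mul (f := fun x => exp (l * x)) h_past_le
          (Finset.measurable_sum _ fun i _ => hZ i).aemeasurable hA_meas (by fun_prop)]
    _ = ∫ ω in A, exp (l * (ε + T ω)) ∂P := by
        simp only [mul_add, exp_add]
        exact (integral_const_mul _ _).symm
    _ ≤ ∫ ω in A, exp (l * ∑ i ∈ range n, Z i ω) ∂P := by
        refine setIntegral_mono_on ?_ ?_ (h_past_le _ hA_meas) fun ω hω => ?_
        · simp only [mul_add, exp_add]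
          exact ((hT_subG.integrable_exp_mul l).const_mul _).integrableOn
        · exact (HasSubgaussianMGF.sum_of_iIndepFun h_indep fun i _ =>
            h_subG i).integrable_exp_mul l |>.integrableOn
        · rw [h_split]
          gcongr
          exact hω.1

lemma exp_mul_measureReal_exists_sum_ge_le_mgf (h_indep : iIndepFun Z P)
    (hZ : ∀ i, Measurable (Z i)) (h_subG : ∀ i, HasSubgaussianMGF (Z i) c P)
    (h0 : ∀ i, P[Z i] = 0) {l : ℝ} (hl : 0 ≤ l) (ε : ℝ) (n : ℕ) :
    exp (l * ε) * P.real {ω | ∃ k ≤ n, ε ≤ ∑ i ∈ range k, Z i ω} ≤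
      mgf (fun ω => ∑ i ∈ range n, Z i ω) P l := by
  set S : ℕ → Ω → ℝ := fun k ω => ∑ i ∈ range k, Z i ω
  have hA_meas : ∀ k, MeasurableSet (firstCrossing S ε k) := fun k =>
    measurableSet_firstCrossing _ _ fun j _ => Finset.measurable_sum _ fun i _ => hZ i
  have h_int : Integrable (fun ω => exp (l * S n ω)) P :=
    (HasSubgaussianMGF.sum_of_iIndepFun h_indep fun i _ => h_subG i).integrable_exp_mul l
  rw [setOf_exists_le_eq_biUnion_firstCrossing]
  calc exp (l * ε) * P.real (⋃ k ∈ range (n + 1), firstCrossing S ε k)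
      ≤ ∑ k ∈ range (n + 1), exp (l * ε) * P.real (firstCrossing S ε k) := by
        rw [← mul_sum]
        gcongr
        exact measureReal_biUnion_finset_le _ _
    _ ≤ ∑ k ∈ range (n + 1), ∫ ω in firstCrossing S ε k, exp (l * S n ω) ∂P :=
        sum_le_sum fun k hk => exp_mul_measureReal_firstCrossing_le_setIntegral h_indep hZ h_subG
          h0 hl ε (Nat.lt_succ_iff.1 (mem_range.1 hk))
    _ = ∫ ω in ⋃ k ∈ range (n + 1), firstCrossing S ε k, exp (l * S n ω) ∂P :=
        (integral_biUnion_finset _ (fun k _ => hA_meas k)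
          ((pairwise_disjoint_firstCrossing S ε).set_pairwise _) fun k _ => h_int.integrableOn).symm
    _ ≤ mgf (S n) P l := setIntegral_le_integral h_int (ae_of_all _ fun ω => (exp_pos _).le)

theorem measureReal_exists_sum_ge_le_of_iIndepFun (h_indep : iIndepFun Z P)
    (hZ : ∀ i, Measurable (Z i)) (h_subG : ∀ i, HasSubgaussianMGF (Z i) c P)
    (h0 : ∀ i, P[Z i] = 0) (n : ℕ) {ε : ℝ} (hε : 0 ≤ ε) :
    P.real {ω | ∃ k ≤ n, ε ≤ ∑ i ∈ range k, Z i ω} ≤ exp (-ε ^ 2 / (2 * n * c)) := by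
  by_cases hnc : (n : ℝ) * c = 0
  · rw [mul_assoc, hnc, mul_zero, div_zero, exp_zero]
    exact measureReal_le_one
  have hnc_pos : 0 < (n : ℝ) * c := lt_of_le_of_ne (by positivity) (Ne.symm hnc)
  -- `l = ε / (n c)` minimises the Chernoff exponent `n c l ^ 2 / 2 - l ε`
  have h := (exp_mul_measureReal_exists_sum_ge_le_mgf h_indep hZ h_subG h0
    (div_nonneg hε hnc_pos.le) ε n).trans
    ((HasSubgaussianMGF.sum_of_iIndepFun (s := range n) h_indep fun i _ => h_subG i).mgf_le _)
  rw [← le_div_iff₀' (exp_pos _), ← exp_sub] at h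
  refine h.trans_eq (congrArg exp ?_)
  simp only [sum_const, card_range, nsmul_eq_mul, NNReal.coe_mul, NNReal.coe_natCast]
  field_simp
  ring

lemma measure_exists_sqrt_le_sum_le_rpow (h_indep : iIndepFun Z P)
    (hZ : ∀ i, Measurable (Z i)) (h_subG : ∀ i, HasSubgaussianMGF (Z i) c P)
    (h0 : ∀ i, P[Z i] = 0) {ρ β b x : ℝ} (hρ : 0 ≤ ρ) (hβ : 0 ≤ β) (hb : 1 ≤ b) (hx : 1 ≤ x) :
    P {ω | ∃ k ≤ ⌊b⌋₊, √(β * b * (ρ * log x)) ≤ ∑ i ∈ range k, Z i ω} ≤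
      ENNReal.ofReal (x ^ (-(ρ * β / (2 * c)))) := by
  have h_floor : (1 : ℝ) ≤ ⌊b⌋₊ := by exact_mod_cast Nat.le_floor (by exact_mod_cast hb)
  have h_ratio : 1 ≤ b / ⌊b⌋₊ :=
    (one_le_div (one_pos.trans_le h_floor)).2 (Nat.floor_le (by linarith))
  have h_log : 0 ≤ log x := log_nonneg hx
  rw [← ofReal_measureReal]
  refine ENNReal.ofReal_le_ofReal <|
    (measureReal_exists_sum_ge_le_of_iIndepFun h_indep hZ h_subG h0 _ (sqrt_nonneg _)).trans ?_
  rw [sq_sqrt (by positivity), rpow_def_of_pos (by linarith), exp_le_exp]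
  calc -(β * b * (ρ * log x)) / (2 * ⌊b⌋₊ * c)
      = -(ρ * β / (2 * c) * log x * (b / ⌊b⌋₊)) := by ring
    _ ≤ -(ρ * β / (2 * c) * log x) :=
        neg_le_neg (le_mul_of_one_le_right (by positivity) h_ratio)
    _ = log x * -(ρ * β / (2 * c)) := by ring

theorem measure_exists_sqrt_le_sum_le (h_indep : iIndepFun Z P)
    (hZ : ∀ i, Measurable (Z i)) (h_subG : ∀ i, HasSubgaussianMGF (Z i) c P)
    (h0 : ∀ i, P[Z i] = 0) {ρ β : ℝ} (hρ : 0 ≤ ρ) (hβ0 : 0 < β) (hβ1 : β < 1) {t : ℕ}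
    (ht : 1 ≤ t) :
    P {ω | ∃ s ∈ Icc 1 t, √(s * (ρ * log t)) ≤ ∑ i ∈ range s, Z i ω} ≤
      ENNReal.ofReal ((log t / log (1 / β) + 1) * (t : ℝ) ^ (-(ρ * β / (2 * c)))) := by
  have hJ : 0 ≤ log t / log (1 / β) :=
    div_nonneg (log_nonneg (by exact_mod_cast ht)) (log_nonneg ((one_le_div hβ0).2 hβ1.le))
  set J := ⌊log t / log (1 / β)⌋₊
  set E : ℕ → Set Ω := fun j =>
    {ω | ∃ k ≤ ⌊β ^ j * t⌋₊, √(β * (β ^ j * t) * (ρ * log t)) ≤ ∑ i ∈ range k, Z i ω}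
  have h_cover : {ω | ∃ s ∈ Icc 1 t, √(s * (ρ * log t)) ≤ ∑ i ∈ range s, Z i ω} ⊆
      ⋃ j ∈ range (J + 1), E j := by
    rintro ω ⟨s, hs, h_sum⟩
    obtain ⟨j, hjJ, h_lt, h_le⟩ :=
      exists_pow_succ_mul_lt_le_pow_mul hβ0 hβ1 (mem_Icc.1 hs).1 (mem_Icc.1 hs).2
    refine Set.mem_biUnion (mem_range.2 (Nat.lt_succ_of_le hjJ)) ⟨s, Nat.le_floor h_le, ?_⟩
    refine (sqrt_le_sqrt ?_).trans h_sum
    rw [← mul_assoc β, ← pow_succ']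
    gcongr
  have h_slice : ∀ j ∈ range (J + 1), P (E j) ≤ ENNReal.ofReal ((t : ℝ) ^ (-(ρ * β / (2 * c)))) :=
    fun j hj => measure_exists_sqrt_le_sum_le_rpow h_indep hZ h_subG h0 hρ hβ0.le
      ((one_le_pow_mul_iff hβ0 hβ1 (by positivity) j).2
        ((Nat.cast_le.2 (Nat.lt_succ_iff.1 (mem_range.1 hj))).trans (Nat.floor_le hJ)))
      (by exact_mod_cast ht)
  calc P {ω | ∃ s ∈ Icc 1 t, √(s * (ρ * log t)) ≤ ∑ i ∈ range s, Z i ω}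
      ≤ ∑ j ∈ range (J + 1), P (E j) := (measure_mono h_cover).trans (measure_biUnion_finset_le _ _)
    _ ≤ ∑ j ∈ range (J + 1), ENNReal.ofReal ((t : ℝ) ^ (-(ρ * β / (2 * c)))) := sum_le_sum h_slice
    _ = ENNReal.ofReal ((J + 1) * (t : ℝ) ^ (-(ρ * β / (2 * c)))) := by
        rw [sum_const, card_range, nsmul_eq_mul, ENNReal.ofReal_mul (by positivity)]
        norm_cast
    _ ≤ ENNReal.ofReal ((log t / log (1 / β) + 1) * (t : ℝ) ^ (-(ρ * β / (2 * c)))) := by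
        gcongr
        exact Nat.floor_le hJ

theorem measure_exists_sqrt_le_sum_le_of_mem_Icc (h_indep : iIndepFun Z P)
    (hZ : ∀ i, Measurable (Z i)) {a : ℝ} (h_mem : ∀ i ω, Z i ω ∈ Set.Icc a (a + 1))
    (h0 : ∀ i, P[Z i] = 0) {ρ β : ℝ} (hρ : 0 ≤ ρ) (hβ0 : 0 < β) (hβ1 : β < 1) {t : ℕ}
    (ht : 1 ≤ t) :
    P {ω | ∃ s ∈ Icc 1 t, √(s * (ρ * log t)) ≤ ∑ i ∈ range s, Z i ω} ≤
      ENNReal.ofReal ((log t / log (1 / β) + 1) * (t : ℝ) ^ (-(2 * ρ * β))) := by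
  have h := measure_exists_sqrt_le_sum_le h_indep hZ (fun i =>
    hasSubgaussianMGF_of_mem_Icc_of_integral_eq_zero (hZ i).aemeasurable
      (ae_of_all _ (h_mem i)) (h0 i)) h0 hρ hβ0 hβ1 ht
  convert h using 6
  norm_num
  ring

end IndependentSums

/-- Let (Y_u) be i.i.d. [0,1]-valued random variables with mean μ, and
Ŷ_s their empirical means. For every ρ > 0, β ∈ (0,1) and integer t ≥ 2, the peeling
argument together with Hoeffding–Azuma's maximal inequality gives
P(∃ s ∈ {1,…,t} : Ŷ_s + √(ρ log t/s) ≤ μ) ≤ (log t/log(1/β) + 1)·t^{-2ρβ}, and likewise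
P(∃ s ∈ {1,…,t} : Ŷ_s ≥ μ + √(ρ log t/s)) ≤ (log t/log(1/β) + 1)·t^{-2ρβ}. -/
theorem peeling_maximal_bound
    (Ω : Type) (_ : MeasurableSpace Ω) (P : Measure Ω) (hP : IsProbabilityMeasure P)
    (Y : ℕ → Ω → ℝ) (hYm : ∀ u, Measurable (Y u))
    (hY01 : ∀ u ω, Y u ω ∈ Set.Icc (0 : ℝ) 1)
    (hindep : iIndepFun Y P)
    (hident : ∀ u, Measure.map (Y u) P = Measure.map (Y 0) P)
    (μ : ℝ) (hμ : μ = ∫ ω, Y 0 ω ∂P)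
    (ρ β : ℝ) (hρ : 0 < ρ) (hβ1 : 0 < β) (hβ2 : β < 1)
    (t : ℕ) (ht : 2 ≤ t) :
    P {ω | ∃ s ∈ Finset.Icc 1 t,
        empMean (fun u => Y u ω) s + Real.sqrt (ρ * Real.log t / s) ≤ μ} ≤
      ENNReal.ofReal
        ((Real.log t / Real.log (1 / β) + 1) * (t : ℝ) ^ (-(2 * ρ * β))) ∧
    P {ω | ∃ s ∈ Finset.Icc 1 t,
        μ + Real.sqrt (ρ * Real.log t / s) ≤ empMean (fun u => Y u ω) s} ≤
      ENNReal.ofReal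
        ((Real.log t / Real.log (1 / β) + 1) * (t : ℝ) ^ (-(2 * ρ * β))) := by
  have h_mean : ∀ u, P[Y u] = μ := fun u =>
    hμ ▸ (IdentDistrib.mk (hYm u).aemeasurable (hYm 0).aemeasurable (hident u)).integral_eq
  have h_int : ∀ u, Integrable (Y u) P := fun u =>
    Integrable.of_mem_Icc 0 1 (hYm u).aemeasurable (ae_of_all _ (hY01 u))
  have h_sqrt : ∀ s : ℕ, √(s * (ρ * log t)) = s * √(ρ * log t / s) := fun s =>
    sqrt_mul_eq_mul_sqrt_div s.cast_nonneg _
  constructor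
  · refine (measure_mono ?_).trans (measure_exists_sqrt_le_sum_le_of_mem_Icc
      (Z := fun u ω => μ - Y u ω) (hindep.comp (fun _ y => μ - y) fun _ => by fun_prop)
      (fun u => by fun_prop) (a := μ - 1)
      (fun u ω => ⟨by linarith [(hY01 u ω).2], by linarith [(hY01 u ω).1]⟩)
      (fun u => by rw [integral_sub (integrable_const μ) (h_int u), h_mean]; simp)
      hρ.le hβ1 hβ2 (by omega))
    rintro ω ⟨s, hs, h⟩
    exact ⟨s, hs, (h_sqrt s).trans_le ((empMean_add_le_iff (mem_Icc.1 hs).1 _ _).1 h)⟩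
  · refine (measure_mono ?_).trans (measure_exists_sqrt_le_sum_le_of_mem_Icc
      (Z := fun u ω => Y u ω - μ) (hindep.comp (fun _ y => y - μ) fun _ => by fun_prop)
      (fun u => by fun_prop) (a := -μ)
      (fun u ω => ⟨by linarith [(hY01 u ω).1], by linarith [(hY01 u ω).2]⟩)
      (fun u => by rw [integral_sub (h_int u) (integrable_const μ), h_mean]; simp)
      hρ.le hβ1 hβ2 (by omega))
    rintro ω ⟨s, hs, h⟩
    exact ⟨s, hs, (h_sqrt s).trans_le ((add_le_empMean_iff (mem_Icc.1 hs).1 _ _).1 h)⟩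

end Bandit
end
end

section
/- Consider the generalized UCB policy with increasing exploration functions f_1, f_2, in the environment θ=(δ_a,δ_b) with 0≤b<a≤1 and Δ=a−b. For every n≥1, the number of pulls of the suboptimal arm is (deterministically) bounded as T_2(n) ≤ f_2(n)/Δ² + 1; consequently the expected regret satisfies E_θ[R_n] ≤ f_2(n)/Δ + 1. -/
open MeasureTheory ProbabilityTheory Filter Asymptotics

noncomputable section

namespace Bandit

lemma empMean_of_const (x : ℕ → ℝ) (c : ℝ) (h : ∀ u, x u = c) {s : ℕ} (hs : s ≠ 0) :
    empMean x s = c := by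
  simp only [empMean]
  rw [Finset.sum_congr rfl fun u _ => h u, Finset.sum_const, Finset.card_range,
    nsmul_eq_mul, mul_comm, mul_div_assoc, div_self (by exact_mod_cast hs), mul_one]

/-- For the generalized UCB policy with increasing exploration functions
f_1, f_2 in the environment θ = (δ_a, δ_b) with 0 ≤ b < a ≤ 1 and Δ = a - b, for every
n ≥ 1 one has T_2(n) ≤ f_2(n)/Δ² + 1; consequently the expected regret
E_θ[R_n] = Δ·T_2(n) satisfies E_θ[R_n] ≤ f_2(n)/Δ + 1. -/
theorem generalized_ucb_dirac_upper_bound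
    (f : Fin 2 → ℕ → ℝ) (hf : ∀ k, Monotone (f k)) (hf0 : ∀ k t, 0 ≤ f k t)
    (a b : ℝ) (hb : 0 ≤ b) (hba : b < a) (ha : a ≤ 1)
    (Δ : ℝ) (hΔ : Δ = a - b) (n : ℕ) (hn : 1 ≤ n) :
    (ucbCount (Nat.succ_pos 1) f (diracTable a b) n 1 : ℝ) ≤ f 1 n / Δ ^ 2 + 1 ∧
    Δ * (ucbCount (Nat.succ_pos 1) f (diracTable a b) n 1 : ℝ) ≤ f 1 n / Δ + 1 := by
  have hΔ0 : 0 < Δ := by rw [hΔ]; linarith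
  set hK := Nat.succ_pos 1 with hhK
  set x := diracTable a b with hx
  have hx0 : ∀ u, x 0 u = a := fun u => by simp [hx, diracTable]
  have hx1 : ∀ u, x 1 u = b := fun u => by simp [hx, diracTable]
  have key : ∀ t, 2 ≤ t →
      1 ≤ ucbCount hK f x t 0 ∧ 1 ≤ ucbCount hK f x t 1 ∧
      (ucbCount hK f x t 1 : ℝ) ≤ f 1 t / Δ ^ 2 + 1 := by
    intro t ht
    induction t with
    | zero => omega
    | succ t ih =>
      rcases Nat.lt_or_ge t 2 with h2 | h2
      · interval_cases t
        · omega
        · have c0 : ucbCount hK f x (1 + 1) 0 = 1 := by simp [ucbCount, ucbArmAux]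
          have c1 : ucbCount hK f x (1 + 1) 1 = 1 := by simp [ucbCount, ucbArmAux]
          refine ⟨le_of_eq c0.symm, le_of_eq c1.symm, ?_⟩
          rw [c1]
          have := hf0 1 2
          have : 0 ≤ f 1 2 / Δ ^ 2 := by positivity
          push_cast
          linarith
      · obtain ⟨h00, h01, hb1⟩ := ih h2
        set T := ucbCount hK f x t with hT
        have hstep : ∀ k, ucbCount hK f x (t + 1) k =
            T k + if ucbArmAux hK f x T (t + 1) = k then 1 else 0 := fun k => rfl
        have hfm : f 1 t ≤ f 1 (t + 1) := hf 1 (Nat.le_succ t)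
        have hdivm : f 1 t / Δ ^ 2 ≤ f 1 (t + 1) / Δ ^ 2 := by gcongr
        by_cases hA : ucbArmAux hK f x T (t + 1) = 1
        · -- suboptimal arm pulled: derive the index inequality
          have hA' := hA
          rw [ucbArmAux, dif_neg (by omega)] at hA'
          set g : Fin 2 → ℝ :=
            fun j => empMean (x j) (T j) + Real.sqrt (f j (t + 1) / (T j : ℝ)) with hg
          have hspec : g 0 ≤ g 1 := by
            have h := argmaxFin_spec hK g 0
            rwa [hA'] at h
          have hg0 : g 0 = a + Real.sqrt (f 0 (t + 1) / (T 0 : ℝ)) := by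
            rw [hg]; simp only
            rw [empMean_of_const (x 0) a hx0 (by omega)]
          have hg1 : g 1 = b + Real.sqrt (f 1 (t + 1) / (T 1 : ℝ)) := by
            rw [hg]; simp only
            rw [empMean_of_const (x 1) b hx1 (by omega)]
          have hsq : Δ ≤ Real.sqrt (f 1 (t + 1) / (T 1 : ℝ)) := by
            have h0 : 0 ≤ Real.sqrt (f 0 (t + 1) / (T 0 : ℝ)) := Real.sqrt_nonneg _
            rw [hg0, hg1] at hspec
            rw [hΔ]; linarith
          have hT1pos : (0 : ℝ) < (T 1 : ℝ) := by exact_mod_cast h01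
          have hfd : 0 ≤ f 1 (t + 1) / (T 1 : ℝ) :=
            div_nonneg (hf0 1 _) (le_of_lt hT1pos)
          have hΔ2 : Δ ^ 2 ≤ f 1 (t + 1) / (T 1 : ℝ) := by
            have hs := Real.sq_sqrt hfd
            nlinarith [Real.sqrt_nonneg (f 1 (t + 1) / (T 1 : ℝ))]
          have hTle : (T 1 : ℝ) ≤ f 1 (t + 1) / Δ ^ 2 := by
            rw [le_div_iff₀ (by positivity)]
            rw [le_div_iff₀ hT1pos] at hΔ2
            linarith
          refine ⟨?_, ?_, ?_⟩
          · rw [hstep 0]; omega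
          · rw [hstep 1, if_pos hA]; exact Nat.le_add_left 1 _
          · rw [hstep 1, if_pos hA]
            push_cast
            linarith
        · -- optimal arm pulled: count of arm 1 unchanged
          have hA0 : ucbArmAux hK f x T (t + 1) = 0 := by
            have hv : (ucbArmAux hK f x T (t + 1)).val < 2 :=
              (ucbArmAux hK f x T (t + 1)).isLt
            have hne : (ucbArmAux hK f x T (t + 1)).val ≠ 1 := by
              intro h
              exact hA (Fin.ext (h.trans (Fin.val_one 1).symm))
            apply Fin.ext
            rw [Fin.val_zero]
            omega
          refine ⟨?_, ?_, ?_⟩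
          · rw [hstep 0, if_pos hA0]; exact Nat.le_add_left 1 _
          · rw [hstep 1, if_neg hA]; omega
          · rw [hstep 1, if_neg hA]
            push_cast
            linarith
  have main : (ucbCount hK f x n 1 : ℝ) ≤ f 1 n / Δ ^ 2 + 1 := by
    rcases Nat.lt_or_ge n 2 with h2 | h2
    · interval_cases n
      have c1 : ucbCount hK f x 1 1 = 0 := by simp [ucbCount, ucbArmAux]
      rw [c1]
      have := hf0 1 1
      have : 0 ≤ f 1 1 / Δ ^ 2 := by positivity
      push_cast
      linarith
    · exact (key n h2).2.2
  refine ⟨main, ?_⟩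
  have hΔ1 : Δ ≤ 1 := by rw [hΔ]; linarith
  have h1 : Δ * (ucbCount hK f x n 1 : ℝ) ≤ Δ * (f 1 n / Δ ^ 2 + 1) := by
    exact mul_le_mul_of_nonneg_left main (le_of_lt hΔ0)
  have h2 : Δ * (f 1 n / Δ ^ 2 + 1) = f 1 n / Δ + Δ := by
    field_simp
  linarith

end Bandit
end
end
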